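/- arXiv:1303.7327 — 2 statements merged into one kernel-verified Lean document; each statement's English description precedes it below -/
import Mathlib

section
/- Let σ be a consistent permutation that is a symmetry of the modal CNF formula φ (i.e. σ(φ) = φ). Then for every pointed Kripke model M, M ⊨ φ if and only if σ(M) ⊨ φ. -/
namespace ModalSym

inductive Lit (Atom : Type) : Type
  | pos (a : Atom) : Lit Atom
  | neg (a : Atom) : Lit Atom
  deriving DecidableEq

namespace Lit
def flip {Atom : Type} : Lit Atom → Lit Atom
  | pos a => neg a
  | neg a => pos a
def atom {Atom : Type} : Lit Atom → Atom
  | pos a => a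
  | neg a => a
end Lit

/-- A permutation `σ` of literals is consistent when it commutes with negation. -/
def Consistent {Atom : Type} (σ : Lit Atom → Lit Atom) : Prop :=
  ∀ l, σ l.flip = (σ l).flip

/-- Modal CNF clauses of modal depth at most `n`: a clause is a finite set whose
elements are literals or modal literals `□ₘ C` / `¬□ₘ C` (`Bool` gives the polarity,
`true` for `□ₘ C`). -/
@[reducible] def ClauseT (Atom Mod : Type) : ℕ → Type
  | 0 => Finset (Lit Atom)
  | n+1 => Finset (Lit Atom ⊕ Bool × Mod × ClauseT Atom Mod n)

instance instDecEqClauseT {Atom Mod : Type} [DecidableEq Atom] [DecidableEq Mod] :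
    ∀ n, DecidableEq (ClauseT Atom Mod n)
  | 0 => inferInstanceAs (DecidableEq (Finset (Lit Atom)))
  | n+1 =>
    letI := instDecEqClauseT (Atom := Atom) (Mod := Mod) n
    inferInstanceAs (DecidableEq (Finset (Lit Atom ⊕ Bool × Mod × ClauseT Atom Mod n)))

/-- A modal CNF formula (of modal depth at most `n`): a finite set of clauses. -/
@[reducible] def FormT (Atom Mod : Type) (n : ℕ) : Type := Finset (ClauseT Atom Mod n)

/-- A pointed Kripke model. -/
structure KModel (Atom Mod : Type) : Type 1 where
  W : Type
  pt : W
  V : W → Set Atom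
  R : Mod → W → W → Prop

def satLit {Atom : Type} (S : Set Atom) : Lit Atom → Prop
  | .pos a => a ∈ S
  | .neg a => a ∉ S

def satClause {Atom Mod : Type} (M : KModel Atom Mod) :
    ∀ n, ClauseT Atom Mod n → M.W → Prop
  | 0, C, v => ∃ l ∈ C, satLit (M.V v) l
  | n+1, C, v => ∃ e ∈ C,
      match e with
      | Sum.inl l => satLit (M.V v) l
      | Sum.inr (b, m, C') =>
          cond b (∀ u, M.R m v u → satClause M n C' u)
                 (¬ ∀ u, M.R m v u → satClause M n C' u)

/-- `M ⊨ φ`. -/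
def satForm {Atom Mod : Type} (M : KModel Atom Mod) {n : ℕ} (φ : FormT Atom Mod n) : Prop :=
  ∀ C ∈ φ, satClause M n C M.pt

/-- `L_S`, the complete consistent set of literals generated by `S ⊆ Atom`. -/
def genLits {Atom : Type} (S : Set Atom) : Set (Lit Atom) := {l | satLit S l}

def permClause {Atom Mod : Type} [DecidableEq Atom] [DecidableEq Mod]
    (σ : Lit Atom → Lit Atom) : ∀ n, ClauseT Atom Mod n → ClauseT Atom Mod n
  | 0, C => C.image σ
  | n+1, C => C.image fun e =>
      match e with
      | Sum.inl l => Sum.inl (σ l)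
      | Sum.inr (b, m, C') => Sum.inr (b, m, permClause σ n C')

/-- The action `σ(φ)` of a permutation of literals on a modal CNF formula. -/
def permForm {Atom Mod : Type} [DecidableEq Atom] [DecidableEq Mod]
    (σ : Lit Atom → Lit Atom) {n : ℕ} (φ : FormT Atom Mod n) : FormT Atom Mod n :=
  φ.image (permClause σ n)

/-- The permuted model `σ(M)`, with `V'(v) = σ(L_{V(v)}) ∩ Atom`. -/
def permModel {Atom Mod : Type} (σ : Lit Atom → Lit Atom) (M : KModel Atom Mod) :
    KModel Atom Mod where
  W := M.W
  pt := M.pt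
  V := fun v => {a | Lit.pos a ∈ σ '' genLits (M.V v)}
  R := M.R

def IsBisim {Atom Mod : Type} (M M' : KModel Atom Mod) (Z : M.W → M'.W → Prop) : Prop :=
  Z M.pt M'.pt ∧
  (∀ v v', Z v v' → ∀ a, a ∈ M.V v ↔ a ∈ M'.V v') ∧
  (∀ v v' m u, Z v v' → M.R m v u → ∃ u', M'.R m v' u' ∧ Z u u') ∧
  (∀ v v' m u', Z v v' → M'.R m v' u' → ∃ u, M.R m v u ∧ Z u u')

def Bisimilar {Atom Mod : Type} (M M' : KModel Atom Mod) : Prop := ∃ Z, IsBisim M M' Z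

def IsSigmaSim {Atom Mod : Type} (σ : Lit Atom → Lit Atom) (M M' : KModel Atom Mod)
    (Z : M.W → M'.W → Prop) : Prop :=
  Z M.pt M'.pt ∧
  (∀ v v', Z v v' → ∀ l, l ∈ genLits (M.V v) ↔ σ l ∈ genLits (M'.V v')) ∧
  (∀ v v' m u, Z v v' → M.R m v u → ∃ u', M'.R m v' u' ∧ Z u u') ∧
  (∀ v v' m u', Z v v' → M'.R m v' u' → ∃ u, M.R m v u ∧ Z u u')

/-- `M ,→σ M'`. -/
def SigmaSim {Atom Mod : Type} (σ : Lit Atom → Lit Atom) (M M' : KModel Atom Mod) : Prop :=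
  ∃ Z, IsSigmaSim σ M M' Z

/-- `IsPathFrom M v p`: `p` is a valid path (list of (modality, state) steps) starting at `v`. -/
def IsPathFrom {Atom Mod : Type} (M : KModel Atom Mod) : M.W → List (Mod × M.W) → Prop
  | _, [] => True
  | v, s :: rest => M.R s.1 v s.2 ∧ IsPathFrom M s.2 rest

def pathLast {Atom Mod : Type} (M : KModel Atom Mod) : M.W → List (Mod × M.W) → M.W
  | v, [] => v
  | _, s :: rest => pathLast M s.2 rest

/-- A tree model: every state is the last state of exactly one rooted path. -/
def IsTree {Atom Mod : Type} (M : KModel Atom Mod) : Prop :=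
  ∀ v : M.W, ∃! p : List (Mod × M.W), IsPathFrom M M.pt p ∧ pathLast M M.pt p = v

/-- The depth of a state: the (minimal) length of a rooted path leading to it. -/
noncomputable def depth {Atom Mod : Type} (M : KModel Atom Mod) (v : M.W) : ℕ :=
  sInf {d | ∃ p, IsPathFrom M M.pt p ∧ pathLast M M.pt p = v ∧ p.length = d}

/-- The unravelling `T(M)`. -/
def unravel {Atom Mod : Type} (M : KModel Atom Mod) : KModel Atom Mod where
  W := {p : List (Mod × M.W) // IsPathFrom M M.pt p}
  pt := ⟨[], trivial⟩
  V := fun p => M.V (pathLast M M.pt p.1)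
  R := fun m p p' => ∃ v, p'.1 = p.1 ++ [(m, v)]

/-- `head(σ̄)`: the first permutation of the sequence, identity for the empty sequence. -/
def headP {Atom : Type} (σs : List (Lit Atom → Lit Atom)) : Lit Atom → Lit Atom :=
  σs.headD id

def lpermClause {Atom Mod : Type} [DecidableEq Atom] [DecidableEq Mod]
    (σs : List (Lit Atom → Lit Atom)) : ∀ n, ClauseT Atom Mod n → ClauseT Atom Mod n
  | 0, C => C.image (headP σs)
  | n+1, C => C.image fun e =>
      match e with
      | Sum.inl l => Sum.inl (headP σs l)
      | Sum.inr (b, m, C') => Sum.inr (b, m, lpermClause σs.tail n C')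

/-- The action `σ̄(φ)` of a permutation sequence on a modal CNF formula. -/
def lpermForm {Atom Mod : Type} [DecidableEq Atom] [DecidableEq Mod]
    (σs : List (Lit Atom → Lit Atom)) {n : ℕ} (φ : FormT Atom Mod n) : FormT Atom Mod n :=
  φ.image (lpermClause σs n)

/-- The layered permuted model `σ̄(M)` (meaningful on tree models):
at a state of depth `d` the permutation `head(σ̄_{d+1})` is used. -/
noncomputable def lpermModel {Atom Mod : Type} (σs : List (Lit Atom → Lit Atom))
    (M : KModel Atom Mod) : KModel Atom Mod where
  W := M.W
  pt := M.pt
  V := fun v => {a | Lit.pos a ∈ headP (σs.drop (depth M v)) '' genLits (M.V v)}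
  R := M.R

def IsLSim {Atom Mod : Type} (σs : List (Lit Atom → Lit Atom)) (M M' : KModel Atom Mod)
    (Z : ℕ → M.W → M'.W → Prop) : Prop :=
  Z 0 M.pt M'.pt ∧
  (∀ i v v', Z i v v' →
    ∀ l, l ∈ genLits (M.V v) ↔ headP (σs.drop i) l ∈ genLits (M'.V v')) ∧
  (∀ i v v' m u, Z i v v' → M.R m v u → ∃ u', M'.R m v' u' ∧ Z (i+1) u u') ∧
  (∀ i v v' m u', Z i v v' → M'.R m v' u' → ∃ u, M.R m v u ∧ Z (i+1) u u')

/-- `M ,→σ̄ M'`. -/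
def LSim {Atom Mod : Type} (σs : List (Lit Atom → Lit Atom)) (M M' : KModel Atom Mod) : Prop :=
  ∃ Z, IsLSim σs M M' Z

/-- `Mod_C(φ)`: the models in the class `𝒞` satisfying `φ`. -/
def ModC {Atom Mod : Type} (𝒞 : Set (KModel Atom Mod)) {n : ℕ} (φ : FormT Atom Mod n) :
    Set (KModel Atom Mod) := {M ∈ 𝒞 | satForm M φ}

/-- `φ ⊨_C ψ`. -/
def Entails {Atom Mod : Type} (𝒞 : Set (KModel Atom Mod)) {n₁ n₂ : ℕ}
    (φ : FormT Atom Mod n₁) (ψ : FormT Atom Mod n₂) : Prop :=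
  ModC 𝒞 φ ⊆ ModC 𝒞 ψ


/-!
A consistent bijection maps the complete consistent set `L_{V(v)}` to a complete consistent set,
which is therefore generated by its atoms, i.e. it is `L_{V'(v)}`. Hence `σ(M)` satisfies `σ(l)`
at `v` iff `M` satisfies `l`, and by induction on the modal depth `σ(M) ⊨ σ(φ)` iff `M ⊨ φ`.
-/

section

variable {Atom Mod : Type}

lemma satLit_flip (S : Set Atom) (l : Lit Atom) : satLit S l.flip ↔ ¬ satLit S l := by
  cases l <;> simp [satLit, Lit.flip]

def IsCompleteConsistent (T : Set (Lit Atom)) : Prop :=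
  ∀ l, l.flip ∈ T ↔ l ∉ T

lemma isCompleteConsistent_genLits (S : Set Atom) : IsCompleteConsistent (genLits S) :=
  satLit_flip S

lemma IsCompleteConsistent.image {σ : Lit Atom → Lit Atom} (hσ : Function.Bijective σ)
    (hcons : Consistent σ) {T : Set (Lit Atom)} (hT : IsCompleteConsistent T) :
    IsCompleteConsistent (σ '' T) := by
  intro k
  obtain ⟨l, rfl⟩ := hσ.2 k
  rw [← hcons, hσ.1.mem_set_image, hσ.1.mem_set_image]
  exact hT l

lemma IsCompleteConsistent.genLits_setOf_pos {T : Set (Lit Atom)}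
    (hT : IsCompleteConsistent T) : genLits {a | Lit.pos a ∈ T} = T := by
  ext (a | a)
  · rfl
  · exact (hT (.neg a)).not_left

lemma genLits_permModel (σ : Lit Atom → Lit Atom) (hσ : Function.Bijective σ)
    (hcons : Consistent σ) (M : KModel Atom Mod) (v : M.W) :
    genLits ((permModel σ M).V v) = σ '' genLits (M.V v) :=
  ((isCompleteConsistent_genLits _).image hσ hcons).genLits_setOf_pos

lemma satLit_permModel (σ : Lit Atom → Lit Atom) (hσ : Function.Bijective σ)
    (hcons : Consistent σ) (M : KModel Atom Mod) (v : M.W) (l : Lit Atom) :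
    satLit ((permModel σ M).V v) (σ l) ↔ satLit (M.V v) l := by
  change σ l ∈ genLits _ ↔ l ∈ genLits _
  rw [genLits_permModel σ hσ hcons, hσ.1.mem_set_image]

lemma satClause_permModel_permClause [DecidableEq Atom] [DecidableEq Mod]
    (σ : Lit Atom → Lit Atom) (hσ : Function.Bijective σ) (hcons : Consistent σ)
    (M : KModel Atom Mod) :
    ∀ n (C : ClauseT Atom Mod n) (v : M.W),
      satClause (permModel σ M) n (permClause σ n C) v ↔ satClause M n C v
  | 0, C, v => by
    simp only [satClause, permClause, Finset.exists_mem_image]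
    exact exists_congr fun l => and_congr_right fun _ => satLit_permModel σ hσ hcons M v l
  | n + 1, C, v => by
    have hbox (m : Mod) (C' : ClauseT Atom Mod n) :
        (∀ u, M.R m v u → satClause (permModel σ M) n (permClause σ n C') u) ↔
          ∀ u, M.R m v u → satClause M n C' u :=
      forall₂_congr fun u _ => satClause_permModel_permClause σ hσ hcons M n C' u
    simp only [satClause, permClause, Finset.exists_mem_image]
    refine exists_congr fun e => and_congr_right fun _ => ?_
    rcases e with l | ⟨_ | _, m, C'⟩
    · exact satLit_permModel σ hσ hcons M v l
    · exact not_congr (hbox m C')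
    · exact hbox m C'

lemma satForm_permModel_permForm [DecidableEq Atom] [DecidableEq Mod]
    (σ : Lit Atom → Lit Atom) (hσ : Function.Bijective σ) (hcons : Consistent σ)
    (M : KModel Atom Mod) {n : ℕ} (φ : FormT Atom Mod n) :
    satForm (permModel σ M) (permForm σ φ) ↔ satForm M φ := by
  simp only [satForm, permForm, Finset.forall_mem_image]
  exact forall₂_congr fun C _ => satClause_permModel_permClause σ hσ hcons M n C M.pt

end

theorem symmetry_sat_iff_permModel_general {Atom Mod : Type}
    [DecidableEq Atom] [DecidableEq Mod]
    (σ : Lit Atom → Lit Atom) (hbij : Function.Bijective σ) (hcons : Consistent σ)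
    {n : ℕ} (φ : FormT Atom Mod n) (hsym : permForm σ φ = φ)
    (M : KModel Atom Mod) :
    satForm M φ ↔ satForm (permModel σ M) φ := by
  conv_rhs => rw [← hsym]
  exact (satForm_permModel_permForm σ hbij hcons M φ).symm

/-- if `σ` is a symmetry of `φ` then `M ⊨ φ` iff `σ(M) ⊨ φ`. -/
theorem symmetry_sat_iff_permModel {Atom Mod : Type} [Countable Atom] [Countable Mod]
    [DecidableEq Atom] [DecidableEq Mod]
    (σ : Lit Atom → Lit Atom) (hbij : Function.Bijective σ) (hcons : Consistent σ)
    {n : ℕ} (φ : FormT Atom Mod n) (hsym : permForm σ φ = φ)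
    (M : KModel Atom Mod) :
    satForm M φ ↔ satForm (permModel σ M) φ :=
  symmetry_sat_iff_permModel_general σ hbij hcons φ hsym M

end ModalSym
end

section
/- For every consistent permutation sequence σ̄ and every tree model M, there is a σ̄-simulation between M and the permuted model σ̄(M), i.e. M ,→σ̄ σ̄(M). -/
namespace ModalSym

/-! In a tree model every edge raises the depth by exactly one, so relating each state to
itself at the level given by its depth is a σ̄-simulation between `M` and `σ̄(M)`, which have
the same frame. Harmony at a state of depth `d` reduces to one permutation `σ = head(σ̄_{d+1})`:
for `σ` bijective and consistent, the complete set of literals generated by `σ(L_S) ∩ Atom`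
is `σ(L_S)` itself. -/

theorem Lit.flip_mem_genLits {Atom : Type} (S : Set Atom) (l : Lit Atom) :
    l.flip ∈ genLits S ↔ l ∉ genLits S := by
  cases l <;> simp [genLits, Lit.flip, satLit]

theorem genLits_setOf_pos_mem_image {Atom : Type} {σ : Lit Atom → Lit Atom}
    (hσ : Function.Bijective σ) (hcons : Consistent σ) (S : Set Atom) :
    genLits {a | Lit.pos a ∈ σ '' genLits S} = σ '' genLits S := by
  ext l
  cases l with
  | pos a => rfl
  | neg a =>
    obtain ⟨l, hl⟩ := hσ.2 (Lit.pos a)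
    have hflip : σ l.flip = Lit.neg a := by rw [hcons, hl]; rfl
    change Lit.pos a ∉ σ '' genLits S ↔ Lit.neg a ∈ σ '' genLits S
    rw [← hl, ← hflip, hσ.1.mem_set_image, hσ.1.mem_set_image, Lit.flip_mem_genLits]

theorem headP_of_forall_mem {Atom : Type} {P : (Lit Atom → Lit Atom) → Prop}
    (σs : List (Lit Atom → Lit Atom)) (hid : P id) (h : ∀ σ ∈ σs, P σ) : P (headP σs) := by
  cases σs with
  | nil => exact hid
  | cons σ _ => exact h σ List.mem_cons_self

section Paths

variable {Atom Mod : Type} (M : KModel Atom Mod)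

theorem isPathFrom_append_singleton {m : Mod} {u : M.W} :
    ∀ {w : M.W} {p : List (Mod × M.W)}, IsPathFrom M w p → M.R m (pathLast M w p) u →
      IsPathFrom M w (p ++ [(m, u)]) ∧ pathLast M w (p ++ [(m, u)]) = u
  | _, [], _, hR => ⟨⟨hR, trivial⟩, rfl⟩
  | _, _ :: _, ⟨hR₀, hp⟩, hR => (isPathFrom_append_singleton hp hR).imp_left (⟨hR₀, ·⟩)

theorem depth_pt : depth M M.pt = 0 :=
  Nat.eq_zero_of_le_zero (Nat.sInf_le ⟨[], trivial, rfl, rfl⟩)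

variable {M}

theorem IsTree.depth_eq_length (htree : IsTree M) {p : List (Mod × M.W)}
    (hp : IsPathFrom M M.pt p) : depth M (pathLast M M.pt p) = p.length := by
  obtain ⟨q, hq, hqv, hqlen⟩ :=
    Nat.sInf_mem (s := {d | ∃ q, IsPathFrom M M.pt q ∧ pathLast M M.pt q = pathLast M M.pt p
      ∧ q.length = d}) ⟨_, p, hp, rfl, rfl⟩
  rw [depth, ← hqlen, (htree _).unique ⟨hq, hqv⟩ ⟨hp, rfl⟩]

theorem IsTree.depth_eq_succ_of_rel (htree : IsTree M) {m : Mod} {v u : M.W} (hR : M.R m v u) :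
    depth M u = depth M v + 1 := by
  obtain ⟨p, ⟨hp, rfl⟩, -⟩ := htree v
  obtain ⟨hp', hlast⟩ := isPathFrom_append_singleton M hp hR
  rw [← hlast, htree.depth_eq_length hp', htree.depth_eq_length hp, List.length_append,
    List.length_singleton]

end Paths

theorem lsim_lpermModel_general {Atom Mod : Type}
    (σs : List (Lit Atom → Lit Atom))
    (hbij : ∀ σ ∈ σs, Function.Bijective σ) (hcons : ∀ σ ∈ σs, Consistent σ)
    (M : KModel Atom Mod) (htree : IsTree M) :
    LSim σs M (lpermModel σs M) := by
  refine ⟨fun i v v' => v' = v ∧ depth M v = i, ⟨rfl, depth_pt M⟩, ?harmony, ?zig, ?zag⟩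
  case harmony =>
    rintro i _ v ⟨rfl, rfl⟩ l
    have hσ := headP_of_forall_mem (σs.drop (depth M v)) Function.bijective_id
      fun σ hσ => hbij σ (List.mem_of_mem_drop hσ)
    have hσcons := headP_of_forall_mem (P := Consistent) (σs.drop (depth M v)) (fun _ => rfl)
      fun σ hσ => hcons σ (List.mem_of_mem_drop hσ)
    show _ ↔ _ ∈ genLits {a | Lit.pos a ∈ _ '' genLits (M.V v)}
    rw [genLits_setOf_pos_mem_image hσ hσcons, hσ.1.mem_set_image]
  case zig =>
    rintro i _ v m u ⟨rfl, rfl⟩ hR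
    exact ⟨u, hR, rfl, htree.depth_eq_succ_of_rel hR⟩
  case zag =>
    rintro i _ v m u ⟨rfl, rfl⟩ hR
    exact ⟨u, hR, rfl, htree.depth_eq_succ_of_rel hR⟩

/-- `M ,→σ̄ σ̄(M)` for every consistent permutation sequence `σ̄` and
tree model `M`. -/
theorem lsim_lpermModel {Atom Mod : Type} [Countable Atom] [Countable Mod]
    (σs : List (Lit Atom → Lit Atom))
    (hbij : ∀ σ ∈ σs, Function.Bijective σ) (hcons : ∀ σ ∈ σs, Consistent σ)
    (M : KModel Atom Mod) (htree : IsTree M) :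
    LSim σs M (lpermModel σs M) :=
  lsim_lpermModel_general σs hbij hcons M htree

end ModalSym
end
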